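/- Let Ω be a finite set with k := |Ω| > 1 and let M ⊆ Δ^k be nonempty. For k' ∈ ℕ let T^{k'} : Ω^ℕ → Ω^ℕ denote the left-shift-by-k' operator, T^{k'}(ω_1, ω_2, …) := (ω_{k'+1}, ω_{k'+2}, …). Then the set function P̲_M(A) := inf{IT(m)(A) : m ∈ M^ℕ}, defined for A in the product σ-algebra on Ω^ℕ, is stationary: P̲_M((T^{k'})^{-1}(A)) = P̲_M(A) for all measurable A and all k' ∈ ℕ. Moreover, for any nonempty closed connected subset N of the closed convex hull of M, the set function P̲_{M→N}(A) := inf{IT(m)(A) : m ∈ M^ℕ_{→N}} is likewise stationary. -/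

import Mathlib

open MeasureTheory Filter Topology

noncomputable section

/-- The set of probability vectors over a finite set `Ω`, i.e. the standard simplex
inside the Euclidean space `ℝ^Ω`. -/
def probVec (Ω : Type*) [Fintype Ω] : Set (EuclideanSpace ℝ Ω) :=
  {p | (∀ x, 0 ≤ p x) ∧ ∑ x, p x = 1}

/-- The relative-frequency vector of the first `n` terms of `ω`. -/
def relFreq {Ω : Type*} [Fintype Ω] [DecidableEq Ω] (ω : ℕ → Ω) (n : ℕ) :
    EuclideanSpace ℝ Ω :=
  WithLp.toLp 2 (fun x => (((Finset.range n).filter fun i => ω i = x).card : ℝ) / n)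

/-- The set of cluster points of a sequence in a topological space. -/
def clusterPts {X : Type*} [TopologicalSpace X] (a : ℕ → X) : Set X :=
  {c | MapClusterPt c atTop a}

/-- Cesàro averages of a sequence of vectors. -/
def cesaro {Ω : Type*} [Fintype Ω] (m : ℕ → EuclideanSpace ℝ Ω) (n : ℕ) :
    EuclideanSpace ℝ Ω :=
  (n : ℝ)⁻¹ • ∑ i ∈ Finset.range n, m i

/-- `μ` is the infinite (Ionescu-Tulcea) independent product of the probability vectors `m i`,
characterized by its values on cylinder sets. -/
def IsIT {Ω : Type*} [Fintype Ω] [MeasurableSpace Ω] (m : ℕ → EuclideanSpace ℝ Ω)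
    (μ : Measure (ℕ → Ω)) : Prop :=
  ∀ (n : ℕ) (x : Fin n → Ω),
    μ {ω | ∀ i : Fin n, ω (i : ℕ) = x i} = ∏ i : Fin n, ENNReal.ofReal (m i.val (x i))

end

/-!
Let `T` be the left shift. If `μ = IT(m)` then `T^k` pushes `μ` forward to `IT(T^k m)`: both
measures give the same mass to every prefix cylinder (sum out the first coordinate, whose marginal
has total mass one, and iterate), and prefix cylinders form a π-system generating the product
σ-algebra. Hence `IT(m)(T^{-k} A) = IT(T^k m)(A)`, and the infimum over a family of marginal
sequences is stationary as soon as `T^k` maps the family onto itself. This holds for `M^ℕ`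
(prepend `k` arbitrary elements of `M`), and for `M^ℕ_{→N}` because the Cesàro averages of `m`
and `T^k m` differ by `O(1/n)`, so they have the same cluster points.
-/

open Finset

section LeftShift

variable {α : Type*}

def leftShift (k : ℕ) (ω : ℕ → α) : ℕ → α := fun n => ω (n + k)

lemma leftShift_zero : (leftShift 0 : (ℕ → α) → ℕ → α) = id := rfl

lemma leftShift_succ (k : ℕ) :
    (leftShift (k + 1) : (ℕ → α) → ℕ → α) = leftShift 1 ∘ leftShift k := by
  funext ω n
  simp only [leftShift, Function.comp_apply, Nat.add_right_comm n 1 k, Nat.add_assoc]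

lemma measurable_leftShift [MeasurableSpace α] (k : ℕ) :
    Measurable (leftShift k : (ℕ → α) → ℕ → α) :=
  measurable_pi_lambda _ fun _ => measurable_pi_apply _

lemma image_leftShift_seqs {M : Set α} (hM : M.Nonempty) (k : ℕ) :
    leftShift k '' {m : ℕ → α | ∀ i, m i ∈ M} = {m | ∀ i, m i ∈ M} := by
  obtain ⟨p, hp⟩ := hM
  refine Set.Subset.antisymm (Set.image_subset_iff.2 fun m hm i => hm (i + k)) fun m' hm' => ?_
  refine ⟨fun i => if i < k then p else m' (i - k), fun i => ?_, funext fun i => ?_⟩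
  · by_cases h : i < k <;> simp [h, hp, hm' _]
  · simp [leftShift]

lemma image_leftShift_seqs_setOf {M : Set α} (hM : M.Nonempty) (k : ℕ)
    {P : (ℕ → α) → Prop} (hP : ∀ m : ℕ → α, (∀ i, m i ∈ M) → (P (leftShift k m) ↔ P m)) :
    leftShift k '' {m : ℕ → α | (∀ i, m i ∈ M) ∧ P m} = {m | (∀ i, m i ∈ M) ∧ P m} := by
  refine Set.Subset.antisymm ?_ fun m' ⟨hm', hPm'⟩ => ?_
  · rintro _ ⟨m, ⟨hm, hPm⟩, rfl⟩
    exact ⟨fun i => hm (i + k), (hP m hm).2 hPm⟩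
  · obtain ⟨m, hm, rfl⟩ := (image_leftShift_seqs hM k).ge hm'
    exact ⟨m, ⟨hm, (hP m hm).1 hPm'⟩, rfl⟩

end LeftShift

section PrefixCylinder

variable {α : Type*}

def prefixCylinder (n : ℕ) (x : Fin n → α) : Set (ℕ → α) := {ω | ∀ i : Fin n, ω i = x i}

def prefixCylinders (α : Type*) : Set (Set (ℕ → α)) :=
  {S | ∃ n, ∃ x : Fin n → α, S = prefixCylinder n x}

lemma measurableSet_prefixCylinder [MeasurableSpace α] [MeasurableSingletonClass α] (n : ℕ)
    (x : Fin n → α) :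
    MeasurableSet (prefixCylinder n x) := by
  have : prefixCylinder n x = ⋂ i : Fin n, (fun ω : ℕ → α => ω i) ⁻¹' {x i} := by
    ext ω
    simp [prefixCylinder]
  rw [this]
  exact .iInter fun i => measurable_pi_apply _ (measurableSet_singleton _)

lemma isPiSystem_prefixCylinders : IsPiSystem (prefixCylinders α) := by
  have absorb : ∀ {n n' : ℕ} (x : Fin n → α) (x' : Fin n' → α), n ≤ n' →
      (prefixCylinder n x ∩ prefixCylinder n' x').Nonempty →
      prefixCylinder n x ∩ prefixCylinder n' x' = prefixCylinder n' x' := by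
    rintro n n' x x' hn ⟨ω₀, h₀, h₀'⟩
    refine Set.inter_eq_self_of_subset_right fun ω hω i => ?_
    rw [← h₀ i, hω ⟨i, i.2.trans_le hn⟩, h₀' ⟨i, i.2.trans_le hn⟩]
  rintro _ ⟨n, x, rfl⟩ _ ⟨n', x', rfl⟩ hne
  rcases le_total n n' with hn | hn
  · exact ⟨n', x', absorb x x' hn hne⟩
  · rw [Set.inter_comm] at hne ⊢
    exact ⟨n, x, absorb x' x hn hne⟩

lemma preimage_eval_singleton_eq_iUnion (j : ℕ) (a : α) :
    (fun ω : ℕ → α => ω j) ⁻¹' {a} = ⋃ y : Fin j → α, prefixCylinder (j + 1) (Fin.snoc y a) := by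
  ext ω
  simp only [Set.mem_preimage, Set.mem_singleton_iff, Set.mem_iUnion, prefixCylinder,
    Set.mem_ofPred_eq, Fin.forall_fin_succ', Fin.snoc_castSucc, Fin.snoc_last, Fin.val_castSucc,
    Fin.val_last]
  exact ⟨fun h => ⟨fun i => ω i, fun _ => rfl, h⟩, fun ⟨_, _, h⟩ => h⟩

lemma generateFrom_prefixCylinders [MeasurableSpace α] [MeasurableSingletonClass α] [Countable α] :
    MeasurableSpace.generateFrom (prefixCylinders α) = MeasurableSpace.pi := by
  refine le_antisymm (MeasurableSpace.generateFrom_le ?_) ?_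
  · rintro _ ⟨n, x, rfl⟩
    exact measurableSet_prefixCylinder n x
  · refine iSup_le fun j => Measurable.comap_le ?_
    refine @measurable_to_countable' α (ℕ → α) _ _ (.generateFrom _) _ fun a => ?_
    rw [preimage_eval_singleton_eq_iUnion]
    exact .iUnion fun y => MeasurableSpace.measurableSet_generateFrom ⟨_, _, rfl⟩

end PrefixCylinder

section IsIT

variable {Ω : Type*} [Fintype Ω]

lemma sum_ofReal_eq_one_of_mem_probVec {p : EuclideanSpace ℝ Ω} (hp : p ∈ probVec Ω) :
    ∑ a, ENNReal.ofReal (p a) = 1 := by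
  rw [← ENNReal.ofReal_sum_of_nonneg fun a _ => hp.1 a, hp.2, ENNReal.ofReal_one]

lemma preimage_leftShift_one_prefixCylinder {α : Type*} (n : ℕ) (x : Fin n → α) :
    leftShift 1 ⁻¹' prefixCylinder n x = ⋃ a : α, prefixCylinder (n + 1) (Fin.cons a x) := by
  ext ω
  simp [leftShift, prefixCylinder, Fin.forall_fin_succ]

variable [MeasurableSpace Ω] {m : ℕ → EuclideanSpace ℝ Ω} {μ ν : Measure (ℕ → Ω)}

lemma IsIT.measure_prefixCylinder (hμ : IsIT m μ) (n : ℕ) (x : Fin n → Ω) :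
    μ (prefixCylinder n x) = ∏ i : Fin n, ENNReal.ofReal (m i (x i)) :=
  hμ n x

lemma IsIT.measure_univ (hμ : IsIT m μ) : μ Set.univ = 1 := by
  simpa using hμ 0 Fin.elim0

variable [MeasurableSingletonClass Ω]

lemma IsIT.unique (hμ : IsIT m μ) (hν : IsIT m ν) : μ = ν := by
  have : IsFiniteMeasure μ := ⟨by simp [hμ.measure_univ]⟩
  refine ext_of_generate_finite _ generateFrom_prefixCylinders.symm isPiSystem_prefixCylinders
    ?_ (by rw [hμ.measure_univ, hν.measure_univ])
  rintro _ ⟨n, x, rfl⟩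
  exact (hμ.measure_prefixCylinder n x).trans (hν.measure_prefixCylinder n x).symm

lemma IsIT.map_leftShift_one (hm : m 0 ∈ probVec Ω) (hμ : IsIT m μ) :
    IsIT (leftShift 1 m) (μ.map (leftShift 1)) := by
  intro n x
  have hdisj : Pairwise
      (Function.onFun Disjoint fun a : Ω => prefixCylinder (n + 1) (Fin.cons a x)) := by
    intro a b hab
    refine Set.disjoint_left.2 fun ω ha hb => hab ?_
    have head : ∀ c, ω ∈ prefixCylinder (n + 1) (Fin.cons c x) → ω 0 = c := fun c h => h 0
    exact (head a ha).symm.trans (head b hb)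
  change μ.map (leftShift 1) (prefixCylinder n x) = _
  rw [Measure.map_apply (measurable_leftShift 1) (measurableSet_prefixCylinder n x),
    preimage_leftShift_one_prefixCylinder,
    measure_iUnion hdisj fun a => measurableSet_prefixCylinder _ _, tsum_fintype]
  calc ∑ a, μ (prefixCylinder (n + 1) (Fin.cons a x))
      = ∑ a, ENNReal.ofReal (m 0 a) * ∏ i : Fin n, ENNReal.ofReal (m (i + 1) (x i)) := by
        simp only [hμ.measure_prefixCylinder, Fin.prod_univ_succ, Fin.cons_zero, Fin.cons_succ,
          Fin.val_zero, Fin.val_succ]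
    _ = ∏ i : Fin n, ENNReal.ofReal (leftShift 1 m i (x i)) := by
        rw [← Finset.sum_mul, sum_ofReal_eq_one_of_mem_probVec hm, one_mul]
        rfl

lemma IsIT.map_leftShift (hm : ∀ i, m i ∈ probVec Ω) (hμ : IsIT m μ) (k : ℕ) :
    IsIT (leftShift k m) (μ.map (leftShift k)) := by
  induction k with
  | zero => simpa [leftShift_zero] using hμ
  | succ k ih =>
    rw [leftShift_succ (α := Ω) k, leftShift_succ (α := EuclideanSpace ℝ Ω) k,
      Function.comp_apply, ← Measure.map_map (measurable_leftShift 1) (measurable_leftShift k)]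
    exact ih.map_leftShift_one (by simpa [leftShift] using hm k)

lemma IsIT.measure_preimage_leftShift (hm : ∀ i, m i ∈ probVec Ω) (hμ : IsIT m μ) {k : ℕ}
    (hν : IsIT (leftShift k m) ν) {A : Set (ℕ → Ω)} (hA : MeasurableSet A) :
    μ (leftShift k ⁻¹' A) = ν A := by
  rw [← Measure.map_apply (measurable_leftShift k) hA, (hμ.map_leftShift hm k).unique hν]

lemma iInf_measure_preimage_leftShift {IT : (ℕ → EuclideanSpace ℝ Ω) → Measure (ℕ → Ω)}
    {S : Set (ℕ → EuclideanSpace ℝ Ω)} (hS : ∀ m ∈ S, ∀ i, m i ∈ probVec Ω)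
    (hIT : ∀ m ∈ S, IsIT m (IT m)) {k : ℕ} (hSk : leftShift k '' S = S)
    {A : Set (ℕ → Ω)} (hA : MeasurableSet A) :
    ⨅ m ∈ S, IT m (leftShift k ⁻¹' A) = ⨅ m ∈ S, IT m A := by
  calc ⨅ m ∈ S, IT m (leftShift k ⁻¹' A)
      = ⨅ m ∈ S, IT (leftShift k m) A := biInf_congr fun m hm =>
        (hIT m hm).measure_preimage_leftShift (hS m hm)
          (hIT _ (hSk.subset (Set.mem_image_of_mem _ hm))) hA
    _ = ⨅ m ∈ leftShift k '' S, IT m A := (iInf_image (g := fun m => IT m A)).symm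
    _ = ⨅ m ∈ S, IT m A := by rw [hSk]

end IsIT

section ClusterPts

lemma clusterPts_comp_add {X : Type*} [TopologicalSpace X] (a : ℕ → X) (k : ℕ) :
    clusterPts (fun n => a (n + k)) = clusterPts a := by
  ext c
  change MapClusterPt c atTop (a ∘ (· + k)) ↔ MapClusterPt c atTop a
  rw [mapClusterPt_comp, map_add_atTop_eq_nat]

lemma MapClusterPt.add_tendsto_zero {E : Type*} [TopologicalSpace E] [AddZeroClass E]
    [ContinuousAdd E] {ι : Type*} {F : Filter ι} {a d : ι → E} {c : E}
    (ha : MapClusterPt c F a) (hd : Tendsto d F (𝓝 0)) : MapClusterPt c F fun i => a i + d i := by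
  obtain ⟨U, hUF, hUa⟩ := mapClusterPt_iff_ultrafilter.1 ha
  exact mapClusterPt_iff_ultrafilter.2 ⟨U, hUF, by simpa using hUa.add (hd.mono_left hUF)⟩

lemma clusterPts_eq_of_tendsto_sub {E : Type*} [TopologicalSpace E] [AddCommGroup E]
    [IsTopologicalAddGroup E] {a b : ℕ → E} (h : Tendsto (fun n => b n - a n) atTop (𝓝 0)) :
    clusterPts a = clusterPts b := by
  ext c
  change MapClusterPt c atTop a ↔ MapClusterPt c atTop b
  refine ⟨fun hc => by simpa using hc.add_tendsto_zero h, fun hc => ?_⟩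
  have h' : Tendsto (fun n => a n - b n) atTop (𝓝 0) := by simpa using h.neg
  simpa using hc.add_tendsto_zero h'

end ClusterPts

section Cesaro

variable {Ω : Type*} [Fintype Ω]

lemma norm_le_one_of_mem_probVec {p : EuclideanSpace ℝ Ω} (hp : p ∈ probVec Ω) : ‖p‖ ≤ 1 := by
  obtain ⟨hnn, hsum⟩ := hp
  have hle : ∀ x, p x ≤ 1 := fun x =>
    hsum ▸ Finset.single_le_sum (fun y _ => hnn y) (Finset.mem_univ x)
  have hsq : ‖p‖ ^ 2 ≤ 1 := by
    rw [EuclideanSpace.norm_sq_eq, ← hsum]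
    refine Finset.sum_le_sum fun x _ => ?_
    rw [Real.norm_eq_abs, sq_abs]
    nlinarith [hnn x, hle x]
  exact (sq_le_one_iff₀ (norm_nonneg p)).1 hsq

lemma norm_sum_range_le {m : ℕ → EuclideanSpace ℝ Ω} {C : ℝ} (hm : ∀ i, ‖m i‖ ≤ C) (n : ℕ) :
    ‖∑ i ∈ range n, m i‖ ≤ n * C := by
  simpa using norm_sum_le_of_le (range n) fun i _ => hm i

lemma norm_cesaro_le {m : ℕ → EuclideanSpace ℝ Ω} {C : ℝ} (hm : ∀ i, ‖m i‖ ≤ C) (n : ℕ) :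
    ‖cesaro m n‖ ≤ C := by
  rcases Nat.eq_zero_or_pos n with rfl | hn
  · simpa [cesaro] using (norm_nonneg _).trans (hm 0)
  · rw [cesaro, norm_smul, norm_inv, Real.norm_natCast, inv_mul_le_iff₀ (by exact_mod_cast hn)]
    exact norm_sum_range_le hm n

lemma cesaro_leftShift_sub (m : ℕ → EuclideanSpace ℝ Ω) (k : ℕ) {n : ℕ} (hn : n ≠ 0) :
    cesaro (leftShift k m) n - cesaro m (n + k) =
      (n : ℝ)⁻¹ • ((k : ℝ) • cesaro m (n + k) - ∑ i ∈ range k, m i) := by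
  have hsplit :
      ∑ i ∈ range (n + k), m i = ∑ i ∈ range k, m i + ∑ i ∈ range n, leftShift k m i := by
    rw [Nat.add_comm, sum_range_add]
    simp only [leftShift, Nat.add_comm k]
  have hn' : (n : ℝ) ≠ 0 := Nat.cast_ne_zero.2 hn
  have hnk : (n : ℝ) + k ≠ 0 := by positivity
  simp only [cesaro, hsplit, Nat.cast_add]
  match_scalars <;> field_simp <;> ring

lemma clusterPts_cesaro_leftShift {m : ℕ → EuclideanSpace ℝ Ω} {C : ℝ} (hm : ∀ i, ‖m i‖ ≤ C)
    (k : ℕ) : clusterPts (cesaro (leftShift k m)) = clusterPts (cesaro m) := by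
  have hbdd (n : ℕ) : ‖(k : ℝ) • cesaro m (n + k) - ∑ i ∈ range k, m i‖ ≤ k * C + k * C :=
    calc _ ≤ ‖(k : ℝ) • cesaro m (n + k)‖ + ‖∑ i ∈ range k, m i‖ := norm_sub_le _ _
      _ ≤ k * C + k * C := by
        rw [norm_smul, Real.norm_natCast]
        exact add_le_add (mul_le_mul_of_nonneg_left (norm_cesaro_le hm _) k.cast_nonneg)
          (norm_sum_range_le hm k)
  have hsub : Tendsto (fun n => cesaro (leftShift k m) n - cesaro m (n + k)) atTop (𝓝 0) := by
    refine ((tendsto_inv_atTop_nhds_zero_nat (𝕜 := ℝ)).zero_smul_isBoundedUnder_le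
      (isBoundedUnder_of ⟨_, hbdd⟩)).congr' ?_
    filter_upwards [eventually_ne_atTop 0] with n hn
    exact (cesaro_leftShift_sub m k hn).symm
  rw [← clusterPts_comp_add (cesaro m) k]
  exact (clusterPts_eq_of_tendsto_sub hsub).symm

end Cesaro

theorem stmt13_general {Ω : Type*} [Fintype Ω] [MeasurableSpace Ω]
    [MeasurableSingletonClass Ω]
    (M : Set (EuclideanSpace ℝ Ω)) (hM : M.Nonempty) (hMsub : M ⊆ probVec Ω)
    (IT : (ℕ → EuclideanSpace ℝ Ω) → Measure (ℕ → Ω))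
    (hIT : ∀ m : ℕ → EuclideanSpace ℝ Ω, (∀ i, m i ∈ M) → IsIT m (IT m)) :
    (∀ (A : Set (ℕ → Ω)), MeasurableSet A → ∀ k' : ℕ,
      (⨅ m ∈ {m : ℕ → EuclideanSpace ℝ Ω | ∀ i, m i ∈ M},
          IT m ((fun (ω : ℕ → Ω) (n : ℕ) => ω (n + k')) ⁻¹' A)) =
        ⨅ m ∈ {m : ℕ → EuclideanSpace ℝ Ω | ∀ i, m i ∈ M}, IT m A) ∧
    (∀ N : Set (EuclideanSpace ℝ Ω), N.Nonempty → IsClosed N → IsConnected N →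
      N ⊆ closure (convexHull ℝ M) →
      ∀ (A : Set (ℕ → Ω)), MeasurableSet A → ∀ k' : ℕ,
        (⨅ m ∈ {m : ℕ → EuclideanSpace ℝ Ω | (∀ i, m i ∈ M) ∧ clusterPts (cesaro m) = N},
            IT m ((fun (ω : ℕ → Ω) (n : ℕ) => ω (n + k')) ⁻¹' A)) =
          ⨅ m ∈ {m : ℕ → EuclideanSpace ℝ Ω | (∀ i, m i ∈ M) ∧ clusterPts (cesaro m) = N},
            IT m A) := by
  refine ⟨fun A hA k' => ?_, fun N _ _ _ _ A hA k' => ?_⟩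
  · exact iInf_measure_preimage_leftShift (fun m (hm : ∀ i, m i ∈ M) i => hMsub (hm i)) hIT
      (image_leftShift_seqs hM k') hA
  · refine iInf_measure_preimage_leftShift (fun m hm i => hMsub (hm.1 i)) (fun m hm => hIT m hm.1)
      (image_leftShift_seqs_setOf hM k' fun m (hm : ∀ i, m i ∈ M) => ?_) hA
    rw [clusterPts_cesaro_leftShift (fun i => norm_le_one_of_mem_probVec (hMsub (hm i))) k']

/-- The lower probabilities `P̲_M` and `P̲_{M→N}` (lower envelopes of the
independent products over `M^ℕ`, resp. `M^ℕ_{→N}`) are stationary with respect to all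
left-shift operators. -/
theorem stmt13 {Ω : Type*} [Fintype Ω] [DecidableEq Ω] [MeasurableSpace Ω]
    [MeasurableSingletonClass Ω] (hcard : 1 < Fintype.card Ω)
    (M : Set (EuclideanSpace ℝ Ω)) (hM : M.Nonempty) (hMsub : M ⊆ probVec Ω)
    (IT : (ℕ → EuclideanSpace ℝ Ω) → Measure (ℕ → Ω))
    (hIT : ∀ m : ℕ → EuclideanSpace ℝ Ω, (∀ i, m i ∈ M) → IsIT m (IT m)) :
    (∀ (A : Set (ℕ → Ω)), MeasurableSet A → ∀ k' : ℕ,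
      (⨅ m ∈ {m : ℕ → EuclideanSpace ℝ Ω | ∀ i, m i ∈ M},
          IT m ((fun (ω : ℕ → Ω) (n : ℕ) => ω (n + k')) ⁻¹' A)) =
        ⨅ m ∈ {m : ℕ → EuclideanSpace ℝ Ω | ∀ i, m i ∈ M}, IT m A) ∧
    (∀ N : Set (EuclideanSpace ℝ Ω), N.Nonempty → IsClosed N → IsConnected N →
      N ⊆ closure (convexHull ℝ M) →
      ∀ (A : Set (ℕ → Ω)), MeasurableSet A → ∀ k' : ℕ,
        (⨅ m ∈ {m : ℕ → EuclideanSpace ℝ Ω | (∀ i, m i ∈ M) ∧ clusterPts (cesaro m) = N},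
            IT m ((fun (ω : ℕ → Ω) (n : ℕ) => ω (n + k')) ⁻¹' A)) =
          ⨅ m ∈ {m : ℕ → EuclideanSpace ℝ Ω | (∀ i, m i ∈ M) ∧ clusterPts (cesaro m) = N},
            IT m A) :=
  stmt13_general M hM hMsub IT hIT
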